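/- (Stable decomposition bound for GenEO-2 with inexact coarse solve) Assume: ∑_{i=1}^N R_iᵀ D_i R_i = I; ‖∑_{i=1}^N R_iᵀ V_i‖_A² ≤ k₀ ∑_{i=1}^N ‖R_iᵀ V_i‖_A² for all V_i; for each j = 1,…,N, B_j is a symmetric positive definite n_j×n_j matrix and p_j : ℝ^{n_j} → ℝ^{n_j} is a linear map such that ‖R_jᵀ D_j (I − p_j) v‖_A² ≤ γ ⟨B_j (I − p_j) v, (I − p_j) v⟩ for all v ∈ ℝ^{n_j}; and ∑_{j=1}^N ⟨B_j (I − p_j) R_j U, (I − p_j) R_j U⟩ ≤ (k₁/τ) ⟨A U, U⟩ for all U ∈ ℝⁿ. Let ε_A := ‖P₀ − P̃₀‖_A and define F U := P₀ U + (P̃₀ − P₀) ∑_{j=1}^N R_jᵀ D_j (I − p_j) R_j U. Then for all U ∈ ℝⁿ: ⟨A (F U), F U⟩ ≤ (1 + ε_A √(k₀ k₁ γ / τ))² ⟨A U, U⟩. -/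

import Mathlib

/-!
Write `F U = P₀ U + (P̃₀ - P₀) W` with `W = ∑ⱼ R_jᵀ D_j (I - p_j) R_j U`. Since `P₀` is the
`A`-orthogonal projection onto `V₀`, `‖P₀ U‖_A ≤ ‖U‖_A`, while `‖(P̃₀ - P₀) W‖_A ≤ ε_A ‖W‖_A`.
Chaining the `k₀`-bound, the local `γ`-bounds and the GenEO-2 bound gives
`‖W‖_A² ≤ (k₀ k₁ γ / τ) ‖U‖_A²`, and the triangle inequality finishes the proof.
-/

open Matrix

/-- The norm induced by an SPD matrix `A`: `‖x‖_A = √(⟨A x, x⟩)`. -/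
noncomputable def aNorm {n : ℕ} (A : Matrix (Fin n) (Fin n) ℝ) (x : Fin n → ℝ) : ℝ :=
  Real.sqrt ((A *ᵥ x) ⬝ᵥ x)

/-- The operator norm of a matrix `M` induced by the `A`-norm. -/
noncomputable def aOpNorm {n : ℕ} (A M : Matrix (Fin n) (Fin n) ℝ) : ℝ :=
  sSup { t : ℝ | ∃ x : Fin n → ℝ, x ≠ 0 ∧ t = aNorm A (M *ᵥ x) / aNorm A x }

lemma dotProduct_mulVec_comm_of_transpose_eq {ι R : Type*} [Fintype ι] [CommSemiring R]
    {A : Matrix ι ι R} (hA : Aᵀ = A) (x y : ι → R) :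
    (A *ᵥ x) ⬝ᵥ y = (A *ᵥ y) ⬝ᵥ x := by
  rw [dotProduct_comm, dotProduct_mulVec, ← hA, vecMul_transpose, hA]

section ANorm

open scoped MatrixOrder

variable {n : ℕ} {A : Matrix (Fin n) (Fin n) ℝ}

lemma dotProduct_mulVec_self_nonneg (hA : A.PosSemidef) (x : Fin n → ℝ) :
    0 ≤ (A *ᵥ x) ⬝ᵥ x := by
  simpa [dotProduct_comm] using hA.dotProduct_mulVec_nonneg x

lemma sq_aNorm (hA : A.PosSemidef) (x : Fin n → ℝ) : aNorm A x ^ 2 = (A *ᵥ x) ⬝ᵥ x :=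
  Real.sq_sqrt (dotProduct_mulVec_self_nonneg hA x)

lemma aNorm_pos (hA : A.PosDef) {x : Fin n → ℝ} (hx : x ≠ 0) : 0 < aNorm A x :=
  Real.sqrt_pos.mpr (by simpa [dotProduct_comm] using hA.dotProduct_mulVec_pos hx)

lemma aNorm_add_le (hA : A.PosSemidef) (x y : Fin n → ℝ) :
    aNorm A (x + y) ≤ aNorm A x + aNorm A y :=
  @norm_add_le _ (A.toSeminormedAddCommGroup hA).toSeminormedAddGroup x y

lemma aNorm_neg (hA : A.PosSemidef) (x : Fin n → ℝ) : aNorm A (-x) = aNorm A x :=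
  @norm_neg _ (A.toSeminormedAddCommGroup hA).toSeminormedAddGroup x

lemma aNorm_le_sqrt_mul_aNorm (hA : A.PosSemidef) {x y : Fin n → ℝ} {c : ℝ}
    (h : (A *ᵥ x) ⬝ᵥ x ≤ c * ((A *ᵥ y) ⬝ᵥ y)) :
    aNorm A x ≤ Real.sqrt c * aNorm A y := by
  rw [aNorm, aNorm, ← Real.sqrt_mul' c (dotProduct_mulVec_self_nonneg hA y)]
  exact Real.sqrt_le_sqrt h

lemma aNorm_eq_norm_sqrt_mulVec (hA : A.PosSemidef) (x : Fin n → ℝ) :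
    aNorm A x = ‖WithLp.toLp 2 (CFC.sqrt A *ᵥ x)‖ := by
  set S := CFC.sqrt A
  have hSt : Sᵀ = S := (CFC.sqrt_nonneg A).posSemidef.isHermitian.eq
  have hSS : S * S = A := CFC.sqrt_mul_sqrt_self A hA.nonneg
  rw [EuclideanSpace.norm_eq, aNorm, ← hSS, ← mulVec_mulVec,
    dotProduct_comm, dotProduct_mulVec, ← mulVec_transpose, hSt]
  simp [dotProduct, sq]

/-- With `S = √A`, the `A`-norm is the Euclidean norm after `S`, so `M` is bounded by the
Euclidean operator norm of `S M S⁻¹`. -/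
lemma exists_aNorm_mulVec_le (hA : A.PosDef) (M : Matrix (Fin n) (Fin n) ℝ) :
    ∃ C, ∀ x, aNorm A (M *ᵥ x) ≤ C * aNorm A x := by
  set S := CFC.sqrt A
  have hS : IsUnit S.det := by
    refine (isUnit_iff_isUnit_det S).mp (isUnit_of_mul_isUnit_left (y := S) ?_)
    rw [CFC.sqrt_mul_sqrt_self A hA.posSemidef.nonneg]
    exact hA.isUnit
  refine ⟨‖toEuclideanCLM (𝕜 := ℝ) (S * M * S⁻¹)‖, fun x => ?_⟩
  have hconj : S *ᵥ (M *ᵥ x) = (S * M * S⁻¹) *ᵥ (S *ᵥ x) := by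
    rw [mulVec_mulVec, mulVec_mulVec, nonsing_inv_mul_cancel_right _ _ hS]
  rw [aNorm_eq_norm_sqrt_mulVec hA.posSemidef, aNorm_eq_norm_sqrt_mulVec hA.posSemidef, hconj,
    ← toEuclideanCLM_toLp]
  exact ContinuousLinearMap.le_opNorm _ _

lemma aOpNorm_nonneg (M : Matrix (Fin n) (Fin n) ℝ) : 0 ≤ aOpNorm A M := by
  refine Real.sSup_nonneg fun t ⟨x, _, ht⟩ => ?_
  exact ht ▸ div_nonneg (Real.sqrt_nonneg _) (Real.sqrt_nonneg _)

lemma aNorm_mulVec_le_aOpNorm_mul (hA : A.PosDef) (M : Matrix (Fin n) (Fin n) ℝ)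
    (x : Fin n → ℝ) : aNorm A (M *ᵥ x) ≤ aOpNorm A M * aNorm A x := by
  rcases eq_or_ne x 0 with rfl | hx
  · simp [aNorm]
  obtain ⟨C, hC⟩ := exists_aNorm_mulVec_le hA M
  have hbdd : BddAbove { t : ℝ | ∃ y : Fin n → ℝ, y ≠ 0 ∧ t = aNorm A (M *ᵥ y) / aNorm A y } :=
    ⟨C, fun t ⟨y, hy, ht⟩ => ht ▸ (div_le_iff₀ (aNorm_pos hA hy)).mpr (hC y)⟩
  exact (div_le_iff₀ (aNorm_pos hA hx)).mp (le_csSup hbdd ⟨x, hx, rfl⟩)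

end ANorm

/-- `P₀ = Z (Zᵀ A Z)⁻¹ Zᵀ A`, the `A`-orthogonal projection onto `range Z` (it is `0` when
`Zᵀ A Z` is singular, because of the junk value of `⁻¹`). -/
noncomputable def aOrthProj {ι κ R : Type*} [Fintype ι] [Fintype κ] [DecidableEq κ] [CommRing R]
    (A : Matrix ι ι R) (Z : Matrix ι κ R) : Matrix ι ι R :=
  Z * (Zᵀ * A * Z)⁻¹ * Zᵀ * A

section AOrthProj

variable {ι κ R : Type*} [Fintype ι] [Fintype κ] [DecidableEq κ] [CommRing R]
  (A : Matrix ι ι R) (Z : Matrix ι κ R)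

lemma nonsing_inv_mul_mul_nonsing_inv (E : Matrix κ κ R) : E⁻¹ * E * E⁻¹ = E⁻¹ := by
  by_cases hE : IsUnit E.det
  · rw [nonsing_inv_mul E hE, Matrix.one_mul]
  · rw [nonsing_inv_apply_not_isUnit E hE, Matrix.zero_mul, Matrix.zero_mul]

lemma aOrthProj_mul_self : aOrthProj A Z * aOrthProj A Z = aOrthProj A Z := by
  calc aOrthProj A Z * aOrthProj A Z
      = Z * ((Zᵀ * A * Z)⁻¹ * (Zᵀ * A * Z) * (Zᵀ * A * Z)⁻¹) * Zᵀ * A := by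
        simp only [aOrthProj, Matrix.mul_assoc]
    _ = aOrthProj A Z := by rw [nonsing_inv_mul_mul_nonsing_inv, aOrthProj]

variable {A} in
lemma transpose_aOrthProj_mul (hA : Aᵀ = A) : (aOrthProj A Z)ᵀ * A = A * aOrthProj A Z := by
  simp only [aOrthProj, transpose_mul, transpose_nonsing_inv, hA, transpose_transpose,
    Matrix.mul_assoc]

end AOrthProj

/-- Pythagoras: `‖x‖²_A = ‖P₀ x‖²_A + ‖x - P₀ x‖²_A`, because `P₀` is `A`-self-adjoint and
idempotent. -/
lemma aNorm_aOrthProj_mulVec_le {n m : ℕ} {A : Matrix (Fin n) (Fin n) ℝ} (hA : A.PosSemidef)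
    (Z : Matrix (Fin n) (Fin m) ℝ) (x : Fin n → ℝ) :
    aNorm A (aOrthProj A Z *ᵥ x) ≤ aNorm A x := by
  have hAt : Aᵀ = A := hA.isHermitian.eq
  have hPP := aOrthProj_mul_self A Z
  have hPA := transpose_aOrthProj_mul Z hAt
  set P := aOrthProj A Z
  have horth : (A *ᵥ (P *ᵥ x)) ⬝ᵥ (P *ᵥ x) = (A *ᵥ (P *ᵥ x)) ⬝ᵥ x := by
    rw [dotProduct_comm, dotProduct_mulVec, vecMul_mulVec, hPA, ← dotProduct_mulVec,
      mulVec_mulVec, Matrix.mul_assoc, hPP, dotProduct_comm, mulVec_mulVec]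
  have hres := dotProduct_mulVec_self_nonneg hA (x - P *ᵥ x)
  rw [mulVec_sub, sub_dotProduct, dotProduct_sub, dotProduct_sub,
    dotProduct_mulVec_comm_of_transpose_eq hAt x (P *ᵥ x)] at hres
  exact Real.sqrt_le_sqrt (by linarith)

lemma aNorm_aOrthProj_add_sub_mulVec_le {n m : ℕ} {A : Matrix (Fin n) (Fin n) ℝ}
    (hA : A.PosDef) (Z : Matrix (Fin n) (Fin m) ℝ) (M : Matrix (Fin n) (Fin n) ℝ)
    (x w : Fin n → ℝ) :
    aNorm A (aOrthProj A Z *ᵥ x + (M - aOrthProj A Z) *ᵥ w)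
      ≤ aNorm A x + aOpNorm A (aOrthProj A Z - M) * aNorm A w :=
  calc _ ≤ aNorm A (aOrthProj A Z *ᵥ x) + aNorm A ((M - aOrthProj A Z) *ᵥ w) :=
        aNorm_add_le hA.posSemidef _ _
    _ ≤ _ := by
      rw [← neg_sub, neg_mulVec, aNorm_neg hA.posSemidef]
      exact add_le_add (aNorm_aOrthProj_mulVec_le hA.posSemidef Z x)
        (aNorm_mulVec_le_aOpNorm_mul hA _ w)

theorem stmt16_general {n m N : ℕ} (A : Matrix (Fin n) (Fin n) ℝ) (hA : A.PosDef)
    (Z : Matrix (Fin n) (Fin m) ℝ)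
    (Et : Matrix (Fin m) (Fin m) ℝ)
    (nd : Fin N → ℕ)
    (R : ∀ i : Fin N, Matrix (Fin (nd i)) (Fin n) ℝ)
    (D : ∀ i : Fin N, Matrix (Fin (nd i)) (Fin (nd i)) ℝ)
    (k₀ k₁ τ γ : ℝ) (hk₀ : 0 < k₀) (hγ : 0 < γ)
    (hk₀bound : ∀ V : ∀ i : Fin N, Fin (nd i) → ℝ,
      (A *ᵥ (∑ i, (R i)ᵀ *ᵥ V i)) ⬝ᵥ (∑ i, (R i)ᵀ *ᵥ V i)
        ≤ k₀ * ∑ i, (A *ᵥ ((R i)ᵀ *ᵥ V i)) ⬝ᵥ ((R i)ᵀ *ᵥ V i))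
    (B : ∀ j : Fin N, Matrix (Fin (nd j)) (Fin (nd j)) ℝ)
    (p : ∀ j : Fin N, Matrix (Fin (nd j)) (Fin (nd j)) ℝ)
    (hγbound : ∀ j (v : Fin (nd j) → ℝ),
      (A *ᵥ ((R j)ᵀ *ᵥ ((D j) *ᵥ ((1 - p j) *ᵥ v)))) ⬝ᵥ
          ((R j)ᵀ *ᵥ ((D j) *ᵥ ((1 - p j) *ᵥ v)))
        ≤ γ * (((B j) *ᵥ ((1 - p j) *ᵥ v)) ⬝ᵥ ((1 - p j) *ᵥ v)))
    (hGenEO2 : ∀ U : Fin n → ℝ,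
      ∑ j, ((B j) *ᵥ ((1 - p j) *ᵥ ((R j) *ᵥ U))) ⬝ᵥ ((1 - p j) *ᵥ ((R j) *ᵥ U))
        ≤ (k₁ / τ) * ((A *ᵥ U) ⬝ᵥ U))
    (εA : ℝ)
    (hεA : εA = aOpNorm A (Z * (Zᵀ * A * Z)⁻¹ * Zᵀ * A - Z * Et⁻¹ * Zᵀ * A)) :
    ∀ U : Fin n → ℝ,
      (A *ᵥ ((Z * (Zᵀ * A * Z)⁻¹ * Zᵀ * A) *ᵥ U
            + (Z * Et⁻¹ * Zᵀ * A - Z * (Zᵀ * A * Z)⁻¹ * Zᵀ * A) *ᵥ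
              (∑ j, (R j)ᵀ *ᵥ ((D j) *ᵥ ((1 - p j) *ᵥ ((R j) *ᵥ U)))))) ⬝ᵥ
          ((Z * (Zᵀ * A * Z)⁻¹ * Zᵀ * A) *ᵥ U
            + (Z * Et⁻¹ * Zᵀ * A - Z * (Zᵀ * A * Z)⁻¹ * Zᵀ * A) *ᵥ
              (∑ j, (R j)ᵀ *ᵥ ((D j) *ᵥ ((1 - p j) *ᵥ ((R j) *ᵥ U)))))
        ≤ (1 + εA * Real.sqrt (k₀ * k₁ * γ / τ)) ^ 2 * ((A *ᵥ U) ⬝ᵥ U) := by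
  intro U
  set W := ∑ j, (R j)ᵀ *ᵥ ((D j) *ᵥ ((1 - p j) *ᵥ ((R j) *ᵥ U)))
  have hWq : (A *ᵥ W) ⬝ᵥ W ≤ k₀ * k₁ * γ / τ * ((A *ᵥ U) ⬝ᵥ U) :=
    calc (A *ᵥ W) ⬝ᵥ W
        ≤ k₀ * ∑ j, (A *ᵥ ((R j)ᵀ *ᵥ ((D j) *ᵥ ((1 - p j) *ᵥ ((R j) *ᵥ U))))) ⬝ᵥ
            ((R j)ᵀ *ᵥ ((D j) *ᵥ ((1 - p j) *ᵥ ((R j) *ᵥ U)))) := hk₀bound _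
      _ ≤ k₀ * (γ * ∑ j, ((B j) *ᵥ ((1 - p j) *ᵥ ((R j) *ᵥ U))) ⬝ᵥ
            ((1 - p j) *ᵥ ((R j) *ᵥ U))) := by
        gcongr k₀ * ?_
        rw [Finset.mul_sum]
        exact Finset.sum_le_sum fun j _ => hγbound j _
      _ ≤ k₀ * (γ * (k₁ / τ * ((A *ᵥ U) ⬝ᵥ U))) := by gcongr; exact hGenEO2 U
      _ = k₀ * k₁ * γ / τ * ((A *ᵥ U) ⬝ᵥ U) := by ring
  have hW := aNorm_le_sqrt_mul_aNorm hA.posSemidef hWq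
  have hF := aNorm_aOrthProj_add_sub_mulVec_le hA Z (Z * Et⁻¹ * Zᵀ * A) U W
  have hεA0 : 0 ≤ εA := hεA ▸ aOpNorm_nonneg _
  change εA = aOpNorm A (aOrthProj A Z - Z * Et⁻¹ * Zᵀ * A) at hεA
  rw [← hεA] at hF
  rw [← sq_aNorm hA.posSemidef, ← sq_aNorm hA.posSemidef, ← mul_pow]
  refine pow_le_pow_left₀ (Real.sqrt_nonneg _) (hF.trans ?_) 2
  linarith [mul_le_mul_of_nonneg_left hW hεA0]

/-- Stable decomposition bound for GenEO-2 with inexact coarse solve: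
with partition of unity, the `k₀`-bound, local bounds
`‖R_jᵀ D_j (I − p_j) v‖_A² ≤ γ ⟨B_j (I − p_j) v, (I − p_j) v⟩` and the GenEO-2 bound
`∑_j ⟨B_j (I − p_j) R_j U, (I − p_j) R_j U⟩ ≤ (k₁/τ) ⟨A U, U⟩`, setting
`F U := P₀ U + (P̃₀ − P₀) ∑_j R_jᵀ D_j (I − p_j) R_j U` and `ε_A := ‖P₀ − P̃₀‖_A`,
one has `⟨A (F U), F U⟩ ≤ (1 + ε_A √(k₀ k₁ γ / τ))² ⟨A U, U⟩` for all `U`. -/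
theorem stmt16 {n m N : ℕ} (A : Matrix (Fin n) (Fin n) ℝ) (hA : A.PosDef)
    (Z : Matrix (Fin n) (Fin m) ℝ) (hZ : LinearIndependent ℝ Zᵀ)
    (Et : Matrix (Fin m) (Fin m) ℝ) (hEt : Et.PosDef)
    (nd : Fin N → ℕ)
    (R : ∀ i : Fin N, Matrix (Fin (nd i)) (Fin n) ℝ)
    (D : ∀ i : Fin N, Matrix (Fin (nd i)) (Fin (nd i)) ℝ)
    (hD : ∀ i, (D i).IsDiag)
    (k₀ k₁ τ γ : ℝ) (hk₀ : 0 < k₀) (hk₁ : 0 < k₁) (hτ : 0 < τ) (hγ : 0 < γ)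
    (hPOU : ∑ i, (R i)ᵀ * D i * R i = (1 : Matrix (Fin n) (Fin n) ℝ))
    (hk₀bound : ∀ V : ∀ i : Fin N, Fin (nd i) → ℝ,
      (A *ᵥ (∑ i, (R i)ᵀ *ᵥ V i)) ⬝ᵥ (∑ i, (R i)ᵀ *ᵥ V i)
        ≤ k₀ * ∑ i, (A *ᵥ ((R i)ᵀ *ᵥ V i)) ⬝ᵥ ((R i)ᵀ *ᵥ V i))
    (B : ∀ j : Fin N, Matrix (Fin (nd j)) (Fin (nd j)) ℝ)
    (hB : ∀ j, (B j).PosDef)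
    (p : ∀ j : Fin N, Matrix (Fin (nd j)) (Fin (nd j)) ℝ)
    (hγbound : ∀ j (v : Fin (nd j) → ℝ),
      (A *ᵥ ((R j)ᵀ *ᵥ ((D j) *ᵥ ((1 - p j) *ᵥ v)))) ⬝ᵥ
          ((R j)ᵀ *ᵥ ((D j) *ᵥ ((1 - p j) *ᵥ v)))
        ≤ γ * (((B j) *ᵥ ((1 - p j) *ᵥ v)) ⬝ᵥ ((1 - p j) *ᵥ v)))
    (hGenEO2 : ∀ U : Fin n → ℝ,
      ∑ j, ((B j) *ᵥ ((1 - p j) *ᵥ ((R j) *ᵥ U))) ⬝ᵥ ((1 - p j) *ᵥ ((R j) *ᵥ U))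
        ≤ (k₁ / τ) * ((A *ᵥ U) ⬝ᵥ U))
    (εA : ℝ)
    (hεA : εA = aOpNorm A (Z * (Zᵀ * A * Z)⁻¹ * Zᵀ * A - Z * Et⁻¹ * Zᵀ * A)) :
    ∀ U : Fin n → ℝ,
      (A *ᵥ ((Z * (Zᵀ * A * Z)⁻¹ * Zᵀ * A) *ᵥ U
            + (Z * Et⁻¹ * Zᵀ * A - Z * (Zᵀ * A * Z)⁻¹ * Zᵀ * A) *ᵥ
              (∑ j, (R j)ᵀ *ᵥ ((D j) *ᵥ ((1 - p j) *ᵥ ((R j) *ᵥ U)))))) ⬝ᵥ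
          ((Z * (Zᵀ * A * Z)⁻¹ * Zᵀ * A) *ᵥ U
            + (Z * Et⁻¹ * Zᵀ * A - Z * (Zᵀ * A * Z)⁻¹ * Zᵀ * A) *ᵥ
              (∑ j, (R j)ᵀ *ᵥ ((D j) *ᵥ ((1 - p j) *ᵥ ((R j) *ᵥ U)))))
        ≤ (1 + εA * Real.sqrt (k₀ * k₁ * γ / τ)) ^ 2 * ((A *ᵥ U) ⬝ᵥ U) :=
  stmt16_general A hA Z Et nd R D k₀ k₁ τ γ hk₀ hγ hk₀bound B p hγbound hGenEO2 εA hεA
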